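/- arXiv:2605.11466 — 4 statements merged into one kernel-verified Lean document; each statement's English description precedes it below -/
import Mathlib

section
/- The circulant graphs C₃₂({1,2,15}) and C₃₂({2,7,9}) are isomorphic; indeed the map φ : ℤ/32ℤ → ℤ/32ℤ given by φ(x) = x + 8 if x is odd and φ(x) = x if x is even is a graph isomorphism from C₃₂({1,2,15}) to C₃₂({2,7,9}). Moreover they are not Adám isomorphic: for every unit x of ℤ/32ℤ, x·({1,2,15} ∪ -{1,2,15}) ≠ {2,7,9} ∪ -{2,7,9} as subsets of ℤ/32ℤ. -/
open Pointwise

/-- The circulant graph `Cₙ(R)`: vertices are `ZMod n`, and distinct `u v` are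
adjacent iff `u - v ∈ R` or `v - u ∈ R`. -/
def circulantGraph (n : ℕ) (R : Set (ZMod n)) : SimpleGraph (ZMod n) where
  Adj u v := u ≠ v ∧ (u - v ∈ R ∨ v - u ∈ R)
  symm := ⟨fun u v h => ⟨h.1.symm, h.2.symm⟩⟩
  loopless := ⟨fun u h => h.1 rfl⟩

/-- The map `φ(x) = x + 8` if `x` is odd, `φ(x) = x` if `x` is even,
where parity refers to the canonical representative in `{0, …, 31}`. -/
def phi : ZMod 32 → ZMod 32 := fun x => if x.val % 2 = 1 then x + 8 else x

/-! `φ` adds `8` exactly to the odd vertices, so it changes a difference `u - v` by `0` when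
`u - v` is even and by `±8` when it is odd. The even parts of the two connection sets agree
(`±2`), and shifting the odd part `{±1, ±15}` by `8` gives `{±7, ±9}`; since both sets are
symmetric, this makes `φ` an isomorphism. No unit `x` relates the two sets, because `x = x · 1`
and `2x = x · 2` would both lie in `{±2, ±7, ±9}`, which contains no pair `y, 2y`. -/

theorem circulantGraph_adj_iff {n : ℕ} {R : Set (ZMod n)} (h0 : (0 : ZMod n) ∉ R)
    {u v : ZMod n} : (circulantGraph n R).Adj u v ↔ u - v ∈ R ∪ -R := by
  rw [Set.mem_union, Set.mem_neg, neg_sub]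
  refine ⟨And.right, fun h => ⟨fun huv => ?_, h⟩⟩
  subst huv
  simp_all

theorem neg_mem_union_neg_iff {α : Type*} [InvolutiveNeg α] {R : Set α} {a : α} :
    -a ∈ R ∪ -R ↔ a ∈ R ∪ -R := by
  simp only [Set.mem_union, Set.mem_neg, neg_neg, or_comm]

theorem image_mul_left_ne {M : Type*} [MulOneClass M] {A B : Set M} {c : M}
    (h1 : 1 ∈ A) (hc : c ∈ A) (hB : ∀ y ∈ B, y * c ∉ B) (x : M) :
    (x * ·) '' A ≠ B := by
  rintro rfl
  exact hB _ ⟨1, h1, mul_one x⟩ ⟨c, hc, rfl⟩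

def parity : ZMod 32 →+* ZMod 2 := ZMod.castHom (by norm_num) (ZMod 2)

theorem parity_apply (x : ZMod 32) : parity x = (x.val : ZMod 2) := by
  rw [parity, ZMod.castHom_apply, ZMod.cast_eq_val]

theorem phi_of_parity_eq_zero {x : ZMod 32} (hx : parity x = 0) : phi x = x := by
  rw [parity_apply, ZMod.natCast_eq_zero_iff] at hx
  exact if_neg (by omega)

theorem phi_of_parity_eq_one {x : ZMod 32} (hx : parity x = 1) : phi x = x + 8 := by
  rw [parity_apply, ← Nat.cast_one, ZMod.natCast_eq_natCast_iff'] at hx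
  exact if_pos (by omega)

theorem parity_phi (x : ZMod 32) : parity (phi x) = parity x := by
  unfold phi
  split_ifs
  · rw [map_add, show parity 8 = 0 by decide, add_zero]
  · rfl

theorem phi_injective : Function.Injective phi := by
  intro u v h
  have hp : parity u = parity v := by rw [← parity_phi u, h, parity_phi]
  rcases (by decide : ∀ a : ZMod 2, a = 0 ∨ a = 1) (parity v) with hv | hv
  · rwa [phi_of_parity_eq_zero (hp.trans hv), phi_of_parity_eq_zero hv] at h
  · rwa [phi_of_parity_eq_one (hp.trans hv), phi_of_parity_eq_one hv, add_left_inj] at h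

local notation "𝒮" => ({1,2,15} : Set (ZMod 32)) ∪ -({1,2,15} : Set (ZMod 32))
local notation "𝒯" => ({2,7,9} : Set (ZMod 32)) ∪ -({2,7,9} : Set (ZMod 32))

theorem mem_T_iff_mem_S_of_parity_eq_zero {d : ZMod 32} (hd : parity d = 0) :
    d ∈ 𝒯 ↔ d ∈ 𝒮 := by
  revert d
  simp only [Set.mem_union, Set.mem_insert_iff, Set.mem_singleton_iff, Set.mem_neg]
  decide

theorem add_eight_mem_T_iff_mem_S_of_parity_eq_one {d : ZMod 32} (hd : parity d = 1) :
    d + 8 ∈ 𝒯 ↔ d ∈ 𝒮 := by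
  revert d
  simp only [Set.mem_union, Set.mem_insert_iff, Set.mem_singleton_iff, Set.mem_neg]
  decide

theorem mul_two_not_mem_T : ∀ y ∈ 𝒯, y * 2 ∉ 𝒯 := by
  simp only [Set.mem_union, Set.mem_insert_iff, Set.mem_singleton_iff, Set.mem_neg]
  decide

theorem phi_sub_phi_mem_T_iff (u v : ZMod 32) : phi u - phi v ∈ 𝒯 ↔ u - v ∈ 𝒮 := by
  have h01 : ∀ a : ZMod 2, a = 0 ∨ a = 1 := by decide
  rcases h01 (parity u) with hu | hu <;> rcases h01 (parity v) with hv | hv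
  · rw [phi_of_parity_eq_zero hu, phi_of_parity_eq_zero hv]
    exact mem_T_iff_mem_S_of_parity_eq_zero (by rw [map_sub, hu, hv, sub_zero])
  · rw [phi_of_parity_eq_zero hu, phi_of_parity_eq_one hv, ← neg_mem_union_neg_iff,
      ← neg_mem_union_neg_iff (a := u - v), neg_sub, neg_sub, add_sub_right_comm]
    exact add_eight_mem_T_iff_mem_S_of_parity_eq_one (by rw [map_sub, hu, hv, sub_zero])
  · rw [phi_of_parity_eq_one hu, phi_of_parity_eq_zero hv, add_sub_right_comm]
    exact add_eight_mem_T_iff_mem_S_of_parity_eq_one (by rw [map_sub, hu, hv, sub_zero])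
  · rw [phi_of_parity_eq_one hu, phi_of_parity_eq_one hv, add_sub_add_right_eq_sub]
    exact mem_T_iff_mem_S_of_parity_eq_zero (by rw [map_sub, hu, hv, sub_self])

theorem stmt0 :
    (Function.Bijective phi ∧
      ∀ u v : ZMod 32,
        (circulantGraph 32 ({1,2,15} : Set (ZMod 32))).Adj u v ↔
          (circulantGraph 32 ({2,7,9} : Set (ZMod 32))).Adj (phi u) (phi v)) ∧
    ∀ x : (ZMod 32)ˣ,
      (fun r => (x : ZMod 32) * r) '' (({1,2,15} : Set (ZMod 32)) ∪ -({1,2,15} : Set (ZMod 32))) ≠ ({2,7,9} : Set (ZMod 32)) ∪ -({2,7,9} : Set (ZMod 32)) := by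
  refine ⟨⟨Finite.injective_iff_bijective.mp phi_injective, fun u v => ?_⟩,
    fun x => image_mul_left_ne (c := 2) (by simp) (by simp) mul_two_not_mem_T x⟩
  rw [circulantGraph_adj_iff (by decide), circulantGraph_adj_iff (by decide),
    phi_sub_phi_mem_T_iff]
end

section
/- The circulant graphs C₃₂({1,6,15}) and C₃₂({6,7,9}) are isomorphic as simple graphs, but they are not Adám isomorphic: for every unit x of ℤ/32ℤ, x·({1,6,15} ∪ -{1,6,15}) ≠ {6,7,9} ∪ -{6,7,9} as subsets of ℤ/32ℤ. -/
/-!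
The isomorphism is the involution of `ZMod 32` that is `a ↦ -a` on even vertices and
`a ↦ 8 - a` on odd ones. It preserves parities, so even differences (here `±6`) are only negated,
while an odd difference `d` becomes `8 - d` or `-8 - d`. The odd part `{±1, ±15}` of the first
connection set is invariant under `d ↦ d + 16`, so both shifts carry it onto `{±7, ±9}`.

No multiplier works: `x = x * 1` would have to be one of `±7, ±9`, and then `6x = ±10`
is not in `{±6, ±7, ±9}`.
-/

open Pointwise

namespace circulantGraph

variable {n : ℕ}

theorem adj_iff_sub_mem_union_neg {R : Set (ZMod n)} {u v : ZMod n} :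
    (circulantGraph n R).Adj u v ↔ u ≠ v ∧ u - v ∈ R ∪ -R := by
  simp only [circulantGraph, Set.mem_union, Set.mem_neg, neg_sub]

def isoOfSubMemIff {R S : Set (ZMod n)} (e : ZMod n ≃ ZMod n)
    (he : ∀ u v, e u - e v ∈ S ∪ -S ↔ u - v ∈ R ∪ -R) :
    circulantGraph n R ≃g circulantGraph n S where
  toEquiv := e
  map_rel_iff' {u v} := by simp only [adj_iff_sub_mem_union_neg, e.injective.ne_iff, he]

end circulantGraph

theorem union_neg_one_six_fifteen :
    ({1, 6, 15} : Set (ZMod 32)) ∪ -{1, 6, 15} = {1, 6, 15, 17, 26, 31} := by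
  ext a
  simp only [Set.mem_union, Set.mem_neg, Set.mem_insert_iff, Set.mem_singleton_iff]
  revert a
  decide

theorem union_neg_six_seven_nine :
    ({6, 7, 9} : Set (ZMod 32)) ∪ -{6, 7, 9} = {6, 7, 9, 23, 25, 26} := by
  ext a
  simp only [Set.mem_union, Set.mem_neg, Set.mem_insert_iff, Set.mem_singleton_iff]
  revert a
  decide

def twistedNeg (a : ZMod 32) : ZMod 32 :=
  if Even a.val then -a else 8 - a

theorem twistedNeg_involutive : Function.Involutive twistedNeg := by
  unfold Function.Involutive
  decide

theorem twistedNeg_sub_mem_iff (u v : ZMod 32) :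
    twistedNeg u - twistedNeg v ∈ ({6, 7, 9, 23, 25, 26} : Set (ZMod 32)) ↔
      u - v ∈ ({1, 6, 15, 17, 26, 31} : Set (ZMod 32)) := by
  revert u v
  decide

theorem mul_six_notMem_of_mem (x : ZMod 32) (hx : x ∈ ({6, 7, 9, 23, 25, 26} : Set (ZMod 32))) :
    x * 6 ∉ ({6, 7, 9, 23, 25, 26} : Set (ZMod 32)) := by
  revert x
  decide

theorem stmt1 :
    Nonempty (circulantGraph 32 ({1,6,15} : Set (ZMod 32)) ≃g circulantGraph 32 ({6,7,9} : Set (ZMod 32))) ∧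
    ∀ x : (ZMod 32)ˣ,
      (fun r => (x : ZMod 32) * r) '' (({1,6,15} : Set (ZMod 32)) ∪ -({1,6,15} : Set (ZMod 32))) ≠ ({6,7,9} : Set (ZMod 32)) ∪ -({6,7,9} : Set (ZMod 32)) := by
  refine ⟨⟨circulantGraph.isoOfSubMemIff twistedNeg_involutive.toPerm fun u v => ?_⟩, ?_⟩
  · rw [union_neg_one_six_fifteen, union_neg_six_seven_nine]
    exact twistedNeg_sub_mem_iff u v
  · intro x hx
    rw [union_neg_one_six_fifteen, union_neg_six_seven_nine] at hx
    have h_one : (x : ZMod 32) * 1 ∈ ({6, 7, 9, 23, 25, 26} : Set (ZMod 32)) :=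
      hx ▸ Set.mem_image_of_mem _ (by simp)
    have h_six : (x : ZMod 32) * 6 ∈ ({6, 7, 9, 23, 25, 26} : Set (ZMod 32)) :=
      hx ▸ Set.mem_image_of_mem _ (by simp)
    exact mul_six_notMem_of_mem _ (mul_one (x : ZMod 32) ▸ h_one) h_six
end

section
/- Let φ : ℤ/32ℤ → ℤ/32ℤ be the map φ(x) = x + 8 if x is odd and φ(x) = x if x is even. For every subset T ⊆ ℤ/32ℤ all of whose elements are even, φ is a graph isomorphism from the circulant graph C₃₂({3,13} ∪ T) to the circulant graph C₃₂({5,11} ∪ T). -/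
open Pointwise

/-!
Write `d = u - v`. If `u` and `v` have the same parity then `φ u - φ v = d` and `d` is even, so
`d` can only be a distance in `T`, on both sides. If they have different parity then `d` is odd,
hence not in `T`, and `φ u - φ v = d ± 8`; translation by `±8` maps `{±3, ±13}` onto `{±5, ±11}`.
-/

lemma circulantGraph_union (n : ℕ) (A B : Set (ZMod n)) :
    circulantGraph n (A ∪ B) = circulantGraph n A ⊔ circulantGraph n B := by
  ext u v
  simp only [circulantGraph, SimpleGraph.sup_adj, Set.mem_union]
  tauto

lemma circulantGraph_adj_map_iff {n m : ℕ} {R : Set (ZMod n)} {R' : Set (ZMod m)}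
    {f : ZMod n → ZMod m} (hf : Function.Injective f)
    (h : ∀ u v, (f u - f v ∈ R' ∨ f v - f u ∈ R') ↔ (u - v ∈ R ∨ v - u ∈ R)) (u v : ZMod n) :
    (circulantGraph m R').Adj (f u) (f v) ↔ (circulantGraph n R).Adj u v :=
  and_congr hf.ne_iff (h u v)

lemma phi_bijective : Function.Bijective phi := by decide

lemma phi_sub_phi_of_even : ∀ u v : ZMod 32, (u - v).val % 2 = 0 → phi u - phi v = u - v := by
  decide

lemma val_phi_sub_phi_mod_two :
    ∀ u v : ZMod 32, (phi u - phi v).val % 2 = (u - v).val % 2 := by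
  decide

lemma phi_sub_phi_mem_iff {T : Set (ZMod 32)} (hT : ∀ t ∈ T, t.val % 2 = 0) (u v : ZMod 32) :
    phi u - phi v ∈ T ↔ u - v ∈ T := by
  constructor
  · intro h
    have heven : (u - v).val % 2 = 0 := val_phi_sub_phi_mod_two u v ▸ hT _ h
    rwa [← phi_sub_phi_of_even u v heven]
  · intro h
    rwa [phi_sub_phi_of_even u v (hT _ h)]

lemma phi_sub_phi_eq_five_or_eleven_iff : ∀ u v : ZMod 32,
    ((phi u - phi v = 5 ∨ phi u - phi v = 11) ∨ (phi v - phi u = 5 ∨ phi v - phi u = 11)) ↔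
      ((u - v = 3 ∨ u - v = 13) ∨ (v - u = 3 ∨ v - u = 13)) := by
  decide

theorem stmt17 (T : Set (ZMod 32)) (hT : ∀ t ∈ T, t.val % 2 = 0) :
    Function.Bijective phi ∧
    ∀ u v : ZMod 32,
      (circulantGraph 32 (({3,13} : Set (ZMod 32)) ∪ T)).Adj u v ↔
        (circulantGraph 32 (({5,11} : Set (ZMod 32)) ∪ T)).Adj (phi u) (phi v) := by
  refine ⟨phi_bijective, fun u v => ?_⟩
  have hodd := circulantGraph_adj_map_iff (R := {3, 13}) (R' := {5, 11}) phi_bijective.1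
    (by simpa only [Set.mem_insert_iff, Set.mem_singleton_iff] using
      phi_sub_phi_eq_five_or_eleven_iff) u v
  have heven := circulantGraph_adj_map_iff (R := T) (R' := T) phi_bijective.1
    (fun u v => by rw [phi_sub_phi_mem_iff hT u v, phi_sub_phi_mem_iff hT v u]) u v
  simp only [circulantGraph_union, SimpleGraph.sup_adj, hodd, heven]
end

section
/- The circulant graphs C₃₂({2,3,4,13}) and C₃₂({2,4,5,11}) are isomorphic as simple graphs, but they are not Adám isomorphic: for every unit x of ℤ/32ℤ, x·({2,3,4,13} ∪ -{2,3,4,13}) ≠ {2,4,5,11} ∪ -{2,4,5,11} as subsets of ℤ/32ℤ. -/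
/-!
Adding 8 to every odd vertex maps the first graph onto the second: differences of vertices of
equal parity are unchanged, and the even parts `{±2, ±4}` of the two connection sets agree, while
differences of mixed parity move by `±8`, and `{±3, ±13} + 8 = {±5, ±11}`.

No unit `x` works: `2x ∈ {±2, ±4, ±5, ±11}` forces `x ≡ ±1 mod 16`, and then `3x ≡ ±3 mod 16`,
which no element of `{±2, ±4, ±5, ±11}` is.
-/

open Pointwise

section ParityShift

variable {G : Type*} [AddCommGroup G] (p : G →+ ZMod 2) {c : G}

def parityShift (hc : p c = 0) : G ≃ G where
  toFun v := if p v = 0 then v else v + c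
  invFun v := if p v = 0 then v else v - c
  left_inv v := by by_cases hv : p v = 0 <;> simp [hv, hc]
  right_inv v := by by_cases hv : p v = 0 <;> simp [hv, hc]

lemma parityShift_sub_parityShift (hc : p c = 0) (u v : G) :
    parityShift p hc u - parityShift p hc v =
      if p (u - v) = 0 then u - v else if p u = 0 then u - v - c else u - v + c := by
  have h01 : ∀ a : ZMod 2, a = 0 ∨ a = 1 := by decide
  simp only [parityShift, Equiv.coe_fn_mk, map_sub]
  rcases h01 (p u) with hu | hu <;> rcases h01 (p v) with hv | hv <;>
    simp only [hu, hv, if_true, if_false, one_ne_zero, sub_self, zero_sub, sub_zero,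
      neg_eq_zero] <;>
    abel

end ParityShift

lemma Set.neg_mem_union_neg {G : Type*} [InvolutiveNeg G] {R : Set G} {d : G} :
    -d ∈ R ∪ -R ↔ d ∈ R ∪ -R := by
  simp only [Set.mem_union, Set.mem_neg, neg_neg, or_comm]

namespace circulantGraph

variable {n : ℕ} {R S : Set (ZMod n)}

lemma adj_iff {u v : ZMod n} : (circulantGraph n R).Adj u v ↔ u ≠ v ∧ u - v ∈ R ∪ -R := by
  simp only [circulantGraph, Set.mem_union, Set.mem_neg, neg_sub]

def isoOfParityShift (p : ZMod n →+ ZMod 2) {c : ZMod n} (hc : p c = 0)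
    (heven : ∀ d, p d = 0 → (d ∈ R ∪ -R ↔ d ∈ S ∪ -S))
    (hodd : ∀ d, p d ≠ 0 → (d ∈ R ∪ -R ↔ d + c ∈ S ∪ -S)) :
    circulantGraph n R ≃g circulantGraph n S where
  toEquiv := parityShift p hc
  map_rel_iff' {u v} := by
    rw [adj_iff, adj_iff, (parityShift p hc).injective.ne_iff, parityShift_sub_parityShift]
    refine and_congr_right fun _ => ?_
    split_ifs with huv hu
    · exact (heven _ huv).symm
    · -- both connection sets are symmetric, so the shift by `-c` reduces to the shift by `c`
      rw [← Set.neg_mem_union_neg, ← Set.neg_mem_union_neg (d := u - v),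
        show -(u - v - c) = -(u - v) + c by abel]
      refine (hodd _ ?_).symm
      rwa [map_neg, neg_ne_zero]
    · exact (hodd _ huv).symm

end circulantGraph

lemma mul_three_not_mem_of_mul_two_mem :
    ∀ x : ZMod 32, x * 2 ∈ ({2,4,5,11} : Set (ZMod 32)) ∪ -{2,4,5,11} →
      x * 3 ∉ ({2,4,5,11} : Set (ZMod 32)) ∪ -{2,4,5,11} := by
  simp only [Set.mem_union, Set.mem_neg, Set.mem_insert_iff, Set.mem_singleton_iff]
  decide

theorem stmt19 :
    Nonempty (circulantGraph 32 ({2,3,4,13} : Set (ZMod 32)) ≃g circulantGraph 32 ({2,4,5,11} : Set (ZMod 32))) ∧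
    ∀ x : (ZMod 32)ˣ,
      (fun r => (x : ZMod 32) * r) '' (({2,3,4,13} : Set (ZMod 32)) ∪ -({2,3,4,13} : Set (ZMod 32))) ≠ ({2,4,5,11} : Set (ZMod 32)) ∪ -({2,4,5,11} : Set (ZMod 32)) := by
  set parity := (ZMod.castHom (by norm_num : 2 ∣ 32) (ZMod 2)).toAddMonoidHom
  refine ⟨⟨circulantGraph.isoOfParityShift parity (c := 8) (by decide) ?_ ?_⟩, ?_⟩
  · simp only [Set.mem_union, Set.mem_neg, Set.mem_insert_iff, Set.mem_singleton_iff]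
    decide
  · simp only [Set.mem_union, Set.mem_neg, Set.mem_insert_iff, Set.mem_singleton_iff]
    decide
  · intro x hx
    have hmem : ∀ r ∈ ({2,3,4,13} : Set (ZMod 32)),
        (x : ZMod 32) * r ∈ ({2,4,5,11} : Set (ZMod 32)) ∪ -{2,4,5,11} := fun r hr => hx ▸ Set.mem_image_of_mem _ (Or.inl hr)
    exact mul_three_not_mem_of_mul_two_mem x (hmem 2 (by simp)) (hmem 3 (by simp))
end
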